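/- arXiv:2005.07867 — 5 statements merged into one kernel-verified Lean document; each statement's English description precedes it below -/
import Mathlib

section
/- A non-empty domain of linear orders D ⊆ L(A) on a finite set A is a Condorcet domain (i.e., the majority relation of every odd profile over D is transitive) if and only if D satisfies a complete set of never conditions, that is, for every 3-element subset {a,b,c} ⊆ A there exist x ∈ {a,b,c} and i ∈ {1,2,3} such that no order in D restricted to {a,b,c} ranks x in position i. -/
/-! Linear orders on a finite set `A` are encoded as duplicate-free lists
(top alternative first) whose set of entries is `A`. -/

variable {α β : Type*}

/-- `w` is a (strict) linear order on `A`, written from top to bottom. -/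
def IsLinOrd [DecidableEq α] (A : Finset α) (w : List α) : Prop :=
  w.Nodup ∧ w.toFinset = A

/-- Restriction of the order `w` to the set `B`. -/
def restr [DecidableEq α] (B : Finset α) (w : List α) : List α :=
  w.filter (fun x => decide (x ∈ B))

/-- Strict majority relation of a profile `P` (a list of linear orders):
`a` beats `b` iff strictly more orders of `P` rank `a` above `b`. -/
def Maj [DecidableEq α] (P : List (List α)) (a b : α) : Prop :=
  P.countP (fun w => decide (w.idxOf a < w.idxOf b)) >
    P.countP (fun w => decide (w.idxOf b < w.idxOf a))

/-- `D` is a Condorcet domain on `A`: all members are linear orders on `A` and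
the majority relation of every odd profile over `D` is transitive. -/
def IsCondorcet [DecidableEq α] (A : Finset α) (D : Set (List α)) : Prop :=
  (∀ w ∈ D, IsLinOrd A w) ∧
    ∀ P : List (List α), (∀ w ∈ P, w ∈ D) → Odd P.length →
      ∀ a ∈ A, ∀ b ∈ A, ∀ c ∈ A, Maj P a b → Maj P b c → Maj P a c

/-- The never condition `x N_{a,b,c} i` (1-based position `i`): no order of `D`
restricted to `{a,b,c}` has `x` in the `i`-th position. -/
def Never [DecidableEq α] (D : Set (List α)) (a b c x : α) (i : ℕ) : Prop :=
  ∀ w ∈ D, (restr {a, b, c} w)[i - 1]? ≠ some x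

/-- `D` is a peak-pit domain on `A`: every triple satisfies a never-top or a
never-bottom condition. -/
def PeakPit [DecidableEq α] (A : Finset α) (D : Set (List α)) : Prop :=
  ∀ a ∈ A, ∀ b ∈ A, ∀ c ∈ A, a ≠ b → a ≠ c → b ≠ c →
    ∃ x ∈ ({a, b, c} : Finset α), Never D a b c x 1 ∨ Never D a b c x 3

/-- Concatenation `D1 ⊙ D2` of two domains (all of `A` ranked above all of `B`). -/
def concatDom (D1 D2 : Set (List α)) : Set (List α) :=
  {w | ∃ x ∈ D1, ∃ y ∈ D2, w = x ++ y}

/-- The set `u ⊕ v` of all shuffles of `u ∈ L(A)` and `v ∈ L(B)`. -/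
def shuffles [DecidableEq α] (A B : Finset α) (u v : List α) : Set (List α) :=
  {w | IsLinOrd (A ∪ B) w ∧ restr A w = u ∧ restr B w = v}

/-- The tensor product `(D1 ⊗ D2)(u,v)` of Danilov–Karzanov–Koshevoy. -/
def tensor [DecidableEq α] (A B : Finset α) (D1 D2 : Set (List α))
    (u v : List α) : Set (List α) :=
  concatDom D1 D2 ∪ shuffles A B u v

/-- `D` has maximal width: it contains a pair of completely reversed orders. -/
def MaxWidth (D : Set (List α)) : Prop :=
  ∃ w ∈ D, w.reverse ∈ D

/-- `w'` is obtained from `w` by one swap of adjacent alternatives. -/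
def AdjSwap (w w' : List α) : Prop :=
  ∃ (l r : List α) (x y : α), w = l ++ x :: y :: r ∧ w' = l ++ y :: x :: r

/-- `D` is semi-connected: some order `w ∈ D` is joined to its reverse by a path
inside `D` of adjacent transpositions in which each pair of alternatives is
swapped exactly once (a maximal chain in the weak Bruhat order, of length
`C(|A|,2)`). -/
def SemiConnected (A : Finset α) (D : Set (List α)) : Prop :=
  ∃ (w : List α) (c : ℕ → List α), w ∈ D ∧ c 0 = w ∧
    c (A.card.choose 2) = w.reverse ∧
    (∀ i, i ≤ A.card.choose 2 → c i ∈ D) ∧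
    (∀ i, i < A.card.choose 2 → AdjSwap (c i) (c (i + 1)))

/-- `D` is a maximal Condorcet domain on `A`. -/
def MaxCondorcet [DecidableEq α] (A : Finset α) (D : Set (List α)) : Prop :=
  IsCondorcet A D ∧ ∀ D' : Set (List α), IsCondorcet A D' → D ⊆ D' → D' ⊆ D

/-- Cardinality of the Fishburn domain `F_n` (Galambos–Reiner formula). -/
def fishCard (n : ℕ) : ℕ :=
  (n + 3) * 2 ^ (n - 3) -
    (if Even n then (2 * n - 3) * (n - 2).choose (n / 2 - 1) / 2
     else (n - 1) / 2 * (n - 1).choose ((n - 1) / 2))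

/-! Restricting every order to a triple `{a, b, c}` reduces everything to profiles of the six
orders of the triple, since majority comparisons inside the triple only see the restrictions.
These six orders form two cyclic classes, `abc, bca, cab` and `acb, cba, bac`. A Condorcet
domain misses an order of each class, because the three orders of a class form a majority
cycle. Two orders from different classes differ by a transposition, so they put the same `x`
in exactly one position `i`, and no other order does: missing both of them is the never
condition `x N i`. Conversely, `x N i` forbids these two orders, and counting the voters of
the four remaining orders shows that no majority cycle survives. -/

lemma List.perm_triple_cases {a b c : α} {σ : List α} (h : σ.Perm [a, b, c]) :
    σ = [a, b, c] ∨ σ = [a, c, b] ∨ σ = [b, a, c] ∨ σ = [b, c, a] ∨ σ = [c, a, b] ∨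
      σ = [c, b, a] := by
  have := List.mem_permutations.2 h
  simp [List.permutations, List.permutationsAux, List.permutationsAux.rec] at this
  tauto

section Triple

variable [DecidableEq α]

lemma List.idxOf_filter_lt_idxOf_filter_iff {p : α → Bool} {x y : α} (hx : p x) (hy : p y)
    (l : List α) : (l.filter p).idxOf x < (l.filter p).idxOf y ↔ l.idxOf x < l.idxOf y := by
  induction l with
  | nil => simp
  | cons u l ih =>
    by_cases hux : u = x
    · subst hux
      by_cases huy : u = y
      · subst huy; simp
      · simp [hx, List.idxOf_cons_ne _ huy]
    · by_cases huy : u = y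
      · subst huy; simp [hy, List.idxOf_cons_ne _ hux]
      · cases hu : p u <;> simp [hu, List.idxOf_cons_ne _ hux, List.idxOf_cons_ne _ huy, ih]

lemma maj_map_restr_iff {B : Finset α} {x y : α} (hx : x ∈ B) (hy : y ∈ B)
    (P : List (List α)) : Maj (P.map (restr B)) x y ↔ Maj P x y := by
  have key (u v : α) (hu : u ∈ B) (hv : v ∈ B) (w : List α) :=
    List.idxOf_filter_lt_idxOf_filter_iff (p := fun t => decide (t ∈ B)) (decide_eq_true hu)
      (decide_eq_true hv) w
  simp only [Maj, List.countP_map, Function.comp_def, restr, key x y hx hy, key y x hy hx]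

lemma restr_perm_of_isLinOrd {A : Finset α} {w : List α} (hw : IsLinOrd A w) {a b c : α}
    (ha : a ∈ A) (hb : b ∈ A) (hc : c ∈ A) (hab : a ≠ b) (hac : a ≠ c) (hbc : b ≠ c) :
    (restr {a, b, c} w).Perm [a, b, c] := by
  obtain ⟨hnd, rfl⟩ := hw
  rw [restr, List.perm_ext_iff_of_nodup (hnd.filter _) (by simp [hab, hac, hbc])]
  simp only [List.mem_toFinset] at ha hb hc
  intro u
  simp only [List.mem_filter, decide_eq_true_eq, Finset.mem_insert, Finset.mem_singleton,
    List.mem_cons, List.not_mem_nil, or_false]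
  exact ⟨And.right, by rintro (rfl | rfl | rfl) <;> simp [*]⟩

lemma IsCondorcet.not_cyclic {A : Finset α} {D : Set (List α)} (hD : IsCondorcet A D)
    {x y z : α} (hx : x ∈ A) (hy : y ∈ A) (hz : z ∈ A) (hxy : x ≠ y) (hxz : x ≠ z)
    (hyz : y ≠ z) {B : Finset α} (hxB : x ∈ B) (hyB : y ∈ B) (hzB : z ∈ B) :
    ¬([x, y, z] ∈ restr B '' D ∧ [y, z, x] ∈ restr B '' D ∧ [z, x, y] ∈ restr B '' D) := by
  rintro ⟨⟨u, hu, hxyz⟩, ⟨v, hv, hyzx⟩, ⟨w, hw, hzxy⟩⟩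
  have hmap : [u, v, w].map (restr B) = [[x, y, z], [y, z, x], [z, x, y]] := by
    simp [hxyz, hyzx, hzxy]
  have hP : ∀ t ∈ [u, v, w], t ∈ D := by simp [hu, hv, hw]
  have htrans := hD.2 [u, v, w] hP ⟨1, rfl⟩ x hx y hy z hz
  rw [← maj_map_restr_iff hxB hyB, ← maj_map_restr_iff hyB hzB,
    ← maj_map_restr_iff hxB hzB, hmap] at htrans
  simp [Maj, hxy, hxz, hyz, hxy.symm, hxz.symm, hyz.symm] at htrans

lemma exists_forall_getElem?_ne {a b c : α} (hab : a ≠ b) (hac : a ≠ c) (hbc : b ≠ c)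
    {E : Set (List α)} (hE : ∀ σ ∈ E, σ.Perm [a, b, c])
    (h₁ : ¬([a, b, c] ∈ E ∧ [b, c, a] ∈ E ∧ [c, a, b] ∈ E))
    (h₂ : ¬([a, c, b] ∈ E ∧ [c, b, a] ∈ E ∧ [b, a, c] ∈ E)) :
    ∃ x ∈ ({a, b, c} : Finset α), ∃ i ∈ ({1, 2, 3} : Finset ℕ), ∀ σ ∈ E, σ[i - 1]? ≠ some x := by
  have hE' (P : List α → Prop) : (∀ σ ∈ E, P σ) ↔ ∀ σ ∈ [a, b, c].permutations, σ ∈ E → P σ :=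
    ⟨fun h σ _ hσ => h σ hσ, fun h σ hσ => h σ (List.mem_permutations.2 (hE σ hσ)) hσ⟩
  simp only [hE']
  simp [List.permutations, List.permutationsAux, List.permutationsAux.rec, hab, hac, hbc,
    hab.symm, hac.symm, hbc.symm]
  tauto

lemma IsCondorcet.exists_never {A : Finset α} {D : Set (List α)} (hD : IsCondorcet A D)
    {a b c : α} (ha : a ∈ A) (hb : b ∈ A) (hc : c ∈ A) (hab : a ≠ b) (hac : a ≠ c)
    (hbc : b ≠ c) :
    ∃ x ∈ ({a, b, c} : Finset α), ∃ i ∈ ({1, 2, 3} : Finset ℕ), Never D a b c x i := by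
  have hE : ∀ σ ∈ restr {a, b, c} '' D, σ.Perm [a, b, c] := by
    rintro _ ⟨w, hw, rfl⟩
    exact restr_perm_of_isLinOrd (hD.1 w hw) ha hb hc hab hac hbc
  obtain ⟨x, hx, i, hi, h⟩ := exists_forall_getElem?_ne hab hac hbc hE
    (hD.not_cyclic ha hb hc hab hac hbc (by simp) (by simp) (by simp))
    (hD.not_cyclic ha hc hb hac hab hbc.symm (by simp) (by simp) (by simp))
  exact ⟨x, hx, i, hi, fun w hw => h _ ⟨w, hw, rfl⟩⟩

lemma countP_idxOf_lt_eq {x y z : α} (hxy : x ≠ y) (hxz : x ≠ z) (hyz : y ≠ z)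
    {Q : List (List α)} (hQ : ∀ σ ∈ Q, σ.Perm [x, y, z]) :
    Q.countP (fun σ => decide (σ.idxOf x < σ.idxOf y)) =
      Q.count [x, y, z] + Q.count [x, z, y] + Q.count [z, x, y] := by
  induction Q with
  | nil => simp
  | cons σ Q ih =>
    rw [List.forall_mem_cons] at hQ
    simp only [List.countP_cons, List.count_cons, ih hQ.2]
    rcases List.perm_triple_cases hQ.1 with rfl | rfl | rfl | rfl | rfl | rfl <;>
      simp [hxy, hxz, hyz, hxy.symm, hxz.symm, hyz.symm] <;> omega

lemma maj_trans_of_forall_getElem?_ne {a b c : α} (hab : a ≠ b) (hac : a ≠ c) (hbc : b ≠ c)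
    {Q : List (List α)} (hQ : ∀ σ ∈ Q, σ.Perm [a, b, c]) {x : α}
    (hx : x ∈ ({a, b, c} : Finset α)) {i : ℕ} (hi : i ∈ ({1, 2, 3} : Finset ℕ))
    (hQx : ∀ σ ∈ Q, σ[i - 1]? ≠ some x) (h₁ : Maj Q a b) (h₂ : Maj Q b c) : Maj Q a c := by
  have hperm : ∀ σ ∈ Q, σ.Perm [b, a, c] ∧ σ.Perm [b, c, a] ∧ σ.Perm [c, b, a] ∧
      σ.Perm [a, c, b] ∧ σ.Perm [c, a, b] := fun σ hσ => by
    refine ⟨?_, ?_, ?_, ?_, ?_⟩ <;> refine (hQ σ hσ).trans (List.perm_iff_count.2 fun _ => ?_) <;>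
      simp only [List.count_cons, List.count_nil] <;> omega
  have hzero (σ : List α) (hσ : σ[i - 1]? = some x) : Q.count σ = 0 :=
    List.count_eq_zero.2 fun hmem => hQx σ hmem hσ
  unfold Maj at h₁ h₂ ⊢
  rw [countP_idxOf_lt_eq hab hac hbc hQ,
    countP_idxOf_lt_eq hab.symm hbc hac fun σ hσ => (hperm σ hσ).1] at h₁
  rw [countP_idxOf_lt_eq hbc hab.symm hac.symm fun σ hσ => (hperm σ hσ).2.1,
    countP_idxOf_lt_eq hbc.symm hac.symm hab.symm fun σ hσ => (hperm σ hσ).2.2.1] at h₂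
  rw [countP_idxOf_lt_eq hac hab hbc.symm fun σ hσ => (hperm σ hσ).2.2.2.1,
    countP_idxOf_lt_eq hac.symm hbc.symm hab fun σ hσ => (hperm σ hσ).2.2.2.2]
  have z₁ := hzero [a, b, c]
  have z₂ := hzero [a, c, b]
  have z₃ := hzero [b, a, c]
  have z₄ := hzero [b, c, a]
  have z₅ := hzero [c, a, b]
  have z₆ := hzero [c, b, a]
  simp only [Finset.mem_insert, Finset.mem_singleton] at hx hi
  rcases hx with rfl | rfl | rfl <;> rcases hi with rfl | rfl | rfl <;>
    simp [hab, hac, hbc, hab.symm, hac.symm, hbc.symm] at z₁ z₂ z₃ z₄ z₅ z₆ <;> omega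

lemma isCondorcet_of_never {A : Finset α} {D : Set (List α)} (hlin : ∀ w ∈ D, IsLinOrd A w)
    (hnever : ∀ a ∈ A, ∀ b ∈ A, ∀ c ∈ A, a ≠ b → a ≠ c → b ≠ c →
      ∃ x ∈ ({a, b, c} : Finset α), ∃ i ∈ ({1, 2, 3} : Finset ℕ), Never D a b c x i) :
    IsCondorcet A D := by
  refine ⟨hlin, fun P hP _ a ha b hb c hc h₁ h₂ => ?_⟩
  rcases eq_or_ne a b with rfl | hab
  · exact absurd h₁ (lt_irrefl _)
  rcases eq_or_ne b c with rfl | hbc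
  · exact h₁
  rcases eq_or_ne a c with rfl | hac
  · exact absurd h₂ (lt_asymm h₁)
  obtain ⟨x, hx, i, hi, hx_never⟩ := hnever a ha b hb c hc hab hac hbc
  have hQ : ∀ σ ∈ P.map (restr {a, b, c}), σ.Perm [a, b, c] := by
    simpa using fun w hw => restr_perm_of_isLinOrd (hlin w (hP w hw)) ha hb hc hab hac hbc
  have hQx : ∀ σ ∈ P.map (restr {a, b, c}), σ[i - 1]? ≠ some x := by
    simpa using fun w hw => hx_never w (hP w hw)
  rw [← maj_map_restr_iff (B := {a, b, c}) (by simp) (by simp)] at h₁ h₂ ⊢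
  exact maj_trans_of_forall_getElem?_ne hab hac hbc hQ hx hi hQx h₁ h₂

end Triple

theorem stmt_0_general [DecidableEq α] (A : Finset α) (D : Set (List α))
    (hlin : ∀ w ∈ D, IsLinOrd A w) :
    IsCondorcet A D ↔
      ∀ a ∈ A, ∀ b ∈ A, ∀ c ∈ A, a ≠ b → a ≠ c → b ≠ c →
        ∃ x ∈ ({a, b, c} : Finset α), ∃ i ∈ ({1, 2, 3} : Finset ℕ),
          Never D a b c x i :=
  ⟨fun hD _ ha _ hb _ hc => hD.exists_never ha hb hc, isCondorcet_of_never hlin⟩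

/-- a non-empty domain of linear orders on `A` is a Condorcet
domain iff it satisfies a complete set of never conditions. -/
theorem stmt_0 [DecidableEq α] (A : Finset α) (D : Set (List α))
    (hne : D.Nonempty) (hlin : ∀ w ∈ D, IsLinOrd A w) :
    IsCondorcet A D ↔
      ∀ a ∈ A, ∀ b ∈ A, ∀ c ∈ A, a ≠ b → a ≠ c → b ≠ c →
        ∃ x ∈ ({a, b, c} : Finset α), ∃ i ∈ ({1, 2, 3} : Finset ℕ),
          Never D a b c x i :=
  stmt_0_general A D hlin
end

section
/- If D1 ⊆ L(A) and D2 ⊆ L(B) are Condorcet domains on disjoint finite sets A and B, then the concatenation D1 ⊙ D2 = { xy : x ∈ D1, y ∈ D2 } (the order ranking all of A above all of B, with A ordered by x and B ordered by y) is a Condorcet domain on A ∪ B. -/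
/-! Linear orders on a finite set `A` are encoded as duplicate-free lists
(top alternative first) whose set of entries is `A`. -/

variable {α β : Type*}

/-! The majority relation of a profile over `D1 ⊙ D2` ranks every alternative of `A` above
every alternative of `B` unanimously. On a pair inside `A` it is the majority relation of the
profile restricted to `A`, which lies in `D1`; on a pair inside `B` positions are shifted by
`|A|`, so it is the majority relation of the restriction to `B`, which lies in `D2`. A
majority cycle therefore lives entirely in `A` or entirely in `B`, where it is excluded. -/

section Restriction

variable [DecidableEq α] {A B : Finset α} {x y : List α}

lemma IsLinOrd.mem_iff (hx : IsLinOrd A x) {a : α} : a ∈ x ↔ a ∈ A := by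
  rw [← hx.2, List.mem_toFinset]

lemma restr_append (A : Finset α) (x y : List α) :
    restr A (x ++ y) = restr A x ++ restr A y :=
  List.filter_append ..

lemma restr_eq_self (h : ∀ a ∈ x, a ∈ A) : restr A x = x :=
  List.filter_eq_self.mpr fun a ha => decide_eq_true (h a ha)

lemma restr_eq_nil (h : ∀ a ∈ x, a ∉ A) : restr A x = [] :=
  List.filter_eq_nil_iff.mpr fun a ha => by simpa using h a ha

lemma IsLinOrd.append (hx : IsLinOrd A x) (hy : IsLinOrd B y) (hAB : Disjoint A B) :
    IsLinOrd (A ∪ B) (x ++ y) := by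
  refine ⟨List.nodup_append'.mpr ⟨hx.1, hy.1, fun a hax hay => ?_⟩, ?_⟩
  · exact Finset.disjoint_left.mp hAB (hx.mem_iff.mp hax) (hy.mem_iff.mp hay)
  · rw [List.toFinset_append, hx.2, hy.2]

lemma IsLinOrd.restr_append_left (hx : IsLinOrd A x) (hy : IsLinOrd B y)
    (hAB : Disjoint A B) : restr A (x ++ y) = x := by
  rw [restr_append, restr_eq_self fun a => hx.mem_iff.mp,
    restr_eq_nil fun b hb => Finset.disjoint_right.mp hAB (hy.mem_iff.mp hb), List.append_nil]

lemma IsLinOrd.restr_append_right (hx : IsLinOrd A x) (hy : IsLinOrd B y)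
    (hAB : Disjoint A B) : restr B (x ++ y) = y := by
  rw [restr_append, restr_eq_self fun b => hy.mem_iff.mp,
    restr_eq_nil fun a ha => Finset.disjoint_left.mp hAB (hx.mem_iff.mp ha), List.nil_append]

lemma IsLinOrd.idxOf_append_right (hx : IsLinOrd A x) (hAB : Disjoint A B) {b : α}
    (hb : b ∈ B) : (x ++ y).idxOf b = y.idxOf b + x.length := by
  rw [List.idxOf_append_of_notMem fun hbx =>
    Finset.disjoint_right.mp hAB hb (hx.mem_iff.mp hbx), add_comm]

lemma IsLinOrd.idxOf_append_lt (hx : IsLinOrd A x) (hAB : Disjoint A B) {a b : α}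
    (ha : a ∈ A) (hb : b ∈ B) : (x ++ y).idxOf a < (x ++ y).idxOf b := by
  rw [List.idxOf_append_of_mem (hx.mem_iff.mpr ha), hx.idxOf_append_right hAB hb]
  exact (List.idxOf_lt_length_of_mem (hx.mem_iff.mpr ha)).trans_le (Nat.le_add_left _ _)

end Restriction

section Majority

variable [DecidableEq α] {P : List (List α)} {a b : α}

lemma countP_idxOf_lt_eq_zero (h : ∀ w ∈ P, w.idxOf a < w.idxOf b) :
    P.countP (fun w => decide (w.idxOf b < w.idxOf a)) = 0 :=
  List.countP_eq_zero.mpr fun w hw => by simpa using (h w hw).le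

lemma maj_of_forall_lt (hP : P ≠ []) (h : ∀ w ∈ P, w.idxOf a < w.idxOf b) : Maj P a b := by
  obtain ⟨w, hw⟩ := List.exists_mem_of_ne_nil P hP
  rw [Maj, countP_idxOf_lt_eq_zero h, gt_iff_lt, List.countP_pos_iff]
  exact ⟨w, hw, decide_eq_true (h w hw)⟩

lemma not_maj_of_forall_lt (h : ∀ w ∈ P, w.idxOf a < w.idxOf b) : ¬ Maj P b a := by
  rw [Maj, countP_idxOf_lt_eq_zero h]
  exact Nat.not_lt_zero _

lemma maj_map_iff_of_shift {f : List α → List α}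
    (h : ∀ w ∈ P, ∃ k, w.idxOf a = (f w).idxOf a + k ∧ w.idxOf b = (f w).idxOf b + k) :
    Maj (P.map f) a b ↔ Maj P a b := by
  have hcount : ∀ c d, (∀ w ∈ P, (f w).idxOf c < (f w).idxOf d ↔ w.idxOf c < w.idxOf d) →
      P.countP (fun w => decide ((f w).idxOf c < (f w).idxOf d)) =
        P.countP (fun w => decide (w.idxOf c < w.idxOf d)) := fun c d hcd =>
    List.countP_congr fun w hw => by simpa using hcd w hw
  simp only [Maj, List.countP_map, Function.comp_def]
  rw [hcount a b, hcount b a] <;>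
  · intro w hw
    obtain ⟨k, hka, hkb⟩ := h w hw
    omega

lemma IsCondorcet.maj_trans_of_shift {A : Finset α} {D : Set (List α)} (hD : IsCondorcet A D)
    {f : List α → List α} (hf : ∀ w ∈ P, f w ∈ D) (hodd : Odd P.length)
    (hshift : ∀ w ∈ P, ∃ k, ∀ c ∈ A, w.idxOf c = (f w).idxOf c + k)
    {c : α} (ha : a ∈ A) (hb : b ∈ A) (hc : c ∈ A) (hab : Maj P a b) (hbc : Maj P b c) :
    Maj P a c := by
  have hmaj : ∀ d ∈ A, ∀ e ∈ A, Maj (P.map f) d e ↔ Maj P d e := fun d hd e he =>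
    maj_map_iff_of_shift fun w hw =>
      (hshift w hw).imp fun k hk => ⟨hk d hd, hk e he⟩
  rw [← hmaj a ha c hc]
  refine hD.2 (P.map f) (by simpa using hf) (by simpa using hodd) a ha b hb c hc ?_ ?_
  · exact (hmaj a ha b hb).mpr hab
  · exact (hmaj b hb c hc).mpr hbc

end Majority

section Concatenation

variable [DecidableEq α] {A B : Finset α} {D1 D2 : Set (List α)} {w : List α}

lemma idxOf_lt_of_mem_concatDom (hD1 : ∀ x ∈ D1, IsLinOrd A x) (hAB : Disjoint A B)
    (hw : w ∈ concatDom D1 D2) {a b : α} (ha : a ∈ A) (hb : b ∈ B) :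
    w.idxOf a < w.idxOf b := by
  obtain ⟨x, hx, y, -, rfl⟩ := hw
  exact (hD1 x hx).idxOf_append_lt hAB ha hb

lemma restr_left_of_mem_concatDom (hD1 : ∀ x ∈ D1, IsLinOrd A x)
    (hD2 : ∀ y ∈ D2, IsLinOrd B y) (hAB : Disjoint A B) (hw : w ∈ concatDom D1 D2) :
    restr A w ∈ D1 ∧ ∃ k, ∀ c ∈ A, w.idxOf c = (restr A w).idxOf c + k := by
  obtain ⟨x, hx, y, hy, rfl⟩ := hw
  rw [(hD1 x hx).restr_append_left (hD2 y hy) hAB]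
  exact ⟨hx, 0, fun c hc => List.idxOf_append_of_mem ((hD1 x hx).mem_iff.mpr hc)⟩

lemma restr_right_of_mem_concatDom (hD1 : ∀ x ∈ D1, IsLinOrd A x)
    (hD2 : ∀ y ∈ D2, IsLinOrd B y) (hAB : Disjoint A B) (hw : w ∈ concatDom D1 D2) :
    restr B w ∈ D2 ∧ ∃ k, ∀ c ∈ B, w.idxOf c = (restr B w).idxOf c + k := by
  obtain ⟨x, hx, y, hy, rfl⟩ := hw
  rw [(hD1 x hx).restr_append_right (hD2 y hy) hAB]
  exact ⟨hy, x.length, fun c hc => (hD1 x hx).idxOf_append_right hAB hc⟩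

end Concatenation

/-- the concatenation of two Condorcet domains on disjoint sets
is a Condorcet domain. -/
theorem stmt_1 [DecidableEq α] (A B : Finset α) (hAB : Disjoint A B)
    (D1 D2 : Set (List α))
    (h1 : IsCondorcet A D1) (h2 : IsCondorcet B D2) :
    IsCondorcet (A ∪ B) (concatDom D1 D2) := by
  refine ⟨?_, fun P hP hodd a ha b hb c hc hab hbc => ?_⟩
  · rintro _ ⟨x, hx, y, hy, rfl⟩
    exact (h1.1 x hx).append (h2.1 y hy) hAB
  have hAtop : ∀ a ∈ A, ∀ b ∈ B, Maj P a b ∧ ¬ Maj P b a := fun a ha b hb =>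
    have hlt w hw := idxOf_lt_of_mem_concatDom h1.1 hAB (hP w hw) ha hb
    ⟨maj_of_forall_lt (List.ne_nil_of_length_pos hodd.pos) hlt, not_maj_of_forall_lt hlt⟩
  have hmajA : ∀ {a b c}, a ∈ A → b ∈ A → c ∈ A → Maj P a b → Maj P b c → Maj P a c :=
    have hrestr w hw := restr_left_of_mem_concatDom h1.1 h2.1 hAB (hP w hw)
    h1.maj_trans_of_shift (fun w hw => (hrestr w hw).1) hodd (fun w hw => (hrestr w hw).2)
  have hmajB : ∀ {a b c}, a ∈ B → b ∈ B → c ∈ B → Maj P a b → Maj P b c → Maj P a c :=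
    have hrestr w hw := restr_right_of_mem_concatDom h1.1 h2.1 hAB (hP w hw)
    h2.maj_trans_of_shift (fun w hw => (hrestr w hw).1) hodd (fun w hw => (hrestr w hw).2)
  rcases Finset.mem_union.mp ha with ha | ha <;> rcases Finset.mem_union.mp hb with hb | hb <;>
    rcases Finset.mem_union.mp hc with hc | hc
  · exact hmajA ha hb hc hab hbc
  · exact (hAtop a ha c hc).1
  · exact absurd hbc (hAtop c hc b hb).2
  · exact (hAtop a ha c hc).1
  · exact absurd hab (hAtop b hb a ha).2
  · exact absurd hab (hAtop b hb a ha).2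
  · exact absurd hbc (hAtop c hc b hb).2
  · exact hmajB ha hb hc hab hbc
end

section
/- Let D be a Condorcet domain of maximal width on a finite set A that is semi-connected. Then for any a ∈ A, the restriction of D to A \ {a} is also a semi-connected Condorcet domain of maximal width. -/
/-! Linear orders on a finite set `A` are encoded as duplicate-free lists
(top alternative first) whose set of entries is `A`. -/

variable {α β : Type*}

/-! Write `[p, q] <+ v` for "`v` ranks `p` above `q`"; restriction to `T ⊆ A` preserves this
relation between alternatives of `T`, so it commutes with majority relations and the Condorcet
property passes to the restriction.

For semi-connectedness, follow the inversions of `cᵢ` relative to `w` along the maximal chain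
`w = c₀, …, c_N = w.reverse`, `N = C(|A|, 2)`. An adjacent swap adds at most one inversion, and all
`N` have to be created in `N` steps, so every step reverses a pair that `w` ranks the right way.
Restricted to `T`, a step swapping two alternatives of `T` is again such a swap, and any other
step leaves the restriction unchanged; removing the repetitions leaves a chain of `C(|T|, 2)`
adjacent swaps from the restriction of `w` to its reverse. -/

open List

namespace List

variable [DecidableEq α]

theorem pair_sublist_iff_idxOf_lt {v : List α} (hv : v.Nodup) {p q : α} (hp : p ∈ v)
    (hq : q ∈ v) : [p, q] <+ v ↔ v.idxOf p < v.idxOf q := by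
  induction v with
  | nil => simp at hp
  | cons h t ih =>
    rw [nodup_cons] at hv
    rcases mem_cons.1 hp with rfl | hp' <;> rcases mem_cons.1 hq with rfl | hq' <;> grind

theorem not_pair_sublist_of_pair_sublist {v : List α} (hv : v.Nodup) {p q : α}
    (h : [p, q] <+ v) : ¬[q, p] <+ v := by
  have hp : p ∈ v := h.subset (by simp)
  have hq : q ∈ v := h.subset (by simp)
  rw [pair_sublist_iff_idxOf_lt hv hp hq] at h
  rw [pair_sublist_iff_idxOf_lt hv hq hp]
  omega

theorem card_pair_sublists {v : List α} (hv : v.Nodup) :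
    ((v.toFinset ×ˢ v.toFinset).filter fun p : α × α => [p.1, p.2] <+ v).card =
      v.length.choose 2 := by
  rw [← length_sublistsLen, ← toFinset_card_of_nodup (nodup_sublistsLen 2 hv)]
  refine Finset.card_bij (fun p _ => [p.1, p.2]) ?_ ?_ ?_
  · rintro ⟨p, q⟩ h
    simp_all [mem_sublistsLen]
  · rintro ⟨p, q⟩ - ⟨p', q'⟩ - h
    simpa using h
  · intro s hs
    obtain ⟨hs, hlen⟩ := mem_sublistsLen.1 (mem_toFinset.1 hs)
    match s, hlen with
    | [p, q], _ =>
      exact ⟨(p, q), by simp [hs, hs.subset (mem_cons_self ..), hs.subset (by simp : q ∈ [p, q])],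
        rfl⟩

omit [DecidableEq α]

theorem sublist_cons_cons_swap {l r : List α} {x y : α} (h : l <+ x :: y :: r)
    (hxy : ¬[x, y] <+ l) : l <+ y :: x :: r := by
  rcases sublist_cons_iff.1 h with h' | ⟨l', rfl, h'⟩
  · exact h'.trans ((sublist_cons_self x r).cons_cons y)
  · rcases sublist_cons_iff.1 h' with h'' | ⟨l'', rfl, -⟩
    · exact (h''.cons_cons x).cons y
    · simp at hxy

theorem sublist_append_swap {l m r : List α} {x y : α} (h : l <+ m ++ x :: y :: r)
    (hxy : ¬[x, y] <+ l) : l <+ m ++ y :: x :: r := by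
  obtain ⟨l₁, l₂, rfl, h₁, h₂⟩ := sublist_append_iff.1 h
  exact h₁.append (sublist_cons_cons_swap h₂ fun h => hxy (h.trans (sublist_append_right _ _)))

theorem pair_sublist_append_swap {m r : List α} {p q x y : α} (hpq : (p, q) ≠ (x, y))
    (h : [p, q] <+ m ++ x :: y :: r) : [p, q] <+ m ++ y :: x :: r :=
  sublist_append_swap h fun hs => hpq (by simpa using (hs.eq_of_length rfl).symm)

theorem pair_sublist_reverse_iff {v : List α} {p q : α} : [p, q] <+ v.reverse ↔ [q, p] <+ v := by
  simpa using reverse_sublist (l₁ := [q, p]) (l₂ := v)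

theorem exists_map_eq_of_forall_mem_image {f : α → β} {s : Set α} :
    ∀ {P : List β}, (∀ x ∈ P, x ∈ f '' s) → ∃ Q : List α, (∀ x ∈ Q, x ∈ s) ∧ Q.map f = P
  | [], _ => ⟨[], by simp, rfl⟩
  | x :: P, h => by
    obtain ⟨y, hy, rfl⟩ := h x mem_cons_self
    obtain ⟨Q, hQ, rfl⟩ :=
      exists_map_eq_of_forall_mem_image fun z hz => h z (mem_cons_of_mem _ hz)
    exact ⟨y :: Q, by simpa [hy] using hQ, rfl⟩

end List

section Restriction

variable [DecidableEq α]

theorem restr_reverse (T : Finset α) (v : List α) : restr T v.reverse = (restr T v).reverse :=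
  filter_reverse

theorem mem_restr {T : Finset α} {v : List α} {z : α} : z ∈ restr T v ↔ z ∈ v ∧ z ∈ T := by
  simp [restr]

theorem pair_sublist_restr_iff {T : Finset α} {v : List α} {p q : α} (hp : p ∈ T) (hq : q ∈ T) :
    [p, q] <+ restr T v ↔ [p, q] <+ v :=
  ⟨fun h => h.trans filter_sublist, fun h => by
    simpa [restr, hp, hq] using h.filter (fun x => decide (x ∈ T))⟩

theorem idxOf_restr_lt_iff {T : Finset α} {v : List α} (hv : v.Nodup) {p q : α}
    (hp : p ∈ T) (hq : q ∈ T) (hpv : p ∈ v) (hqv : q ∈ v) :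
    (restr T v).idxOf p < (restr T v).idxOf q ↔ v.idxOf p < v.idxOf q := by
  rw [← pair_sublist_iff_idxOf_lt (v := restr T v) (hv.filter _) (mem_restr.2 ⟨hpv, hp⟩)
    (mem_restr.2 ⟨hqv, hq⟩), ← pair_sublist_iff_idxOf_lt hv hpv hqv, pair_sublist_restr_iff hp hq]

theorem restr_swap_of_mem {T : Finset α} {l r : List α} {x y : α} (hx : x ∈ T) (hy : y ∈ T) :
    restr T (l ++ x :: y :: r) = restr T l ++ x :: y :: restr T r := by
  simp [restr, hx, hy]

theorem restr_swap_of_not_mem {T : Finset α} {l r : List α} {x y : α} (h : ¬(x ∈ T ∧ y ∈ T)) :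
    restr T (l ++ y :: x :: r) = restr T (l ++ x :: y :: r) := by
  by_cases hx : x ∈ T <;> simp_all [restr, filter_cons]

theorem IsLinOrd.mem {A : Finset α} {v : List α} (hv : IsLinOrd A v) {z : α} (hz : z ∈ A) :
    z ∈ v := by
  rw [← List.mem_toFinset, hv.2]
  exact hz

theorem IsLinOrd.restr {A T : Finset α} {v : List α} (hv : IsLinOrd A v) (hTA : T ⊆ A) :
    IsLinOrd T (restr T v) := by
  refine ⟨hv.1.filter _, ?_⟩
  ext z
  simp only [List.mem_toFinset, mem_restr, and_iff_right_iff_imp]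
  exact fun hz => hv.mem (hTA hz)

end Restriction

section Inversions

variable [DecidableEq α]

def inversions (T : Finset α) (w v : List α) : Finset (α × α) :=
  (T ×ˢ T).filter fun p => [p.1, p.2] <+ w ∧ [p.2, p.1] <+ v

theorem mem_inversions {T : Finset α} {w v : List α} {p q : α} :
    (p, q) ∈ inversions T w v ↔ p ∈ T ∧ q ∈ T ∧ [p, q] <+ w ∧ [q, p] <+ v := by
  simp [inversions, and_assoc]

theorem inversions_self {T : Finset α} {w : List α} (hw : w.Nodup) : inversions T w w = ∅ := by
  ext ⟨p, q⟩
  simp only [mem_inversions, Finset.notMem_empty, iff_false]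
  rintro ⟨-, -, h, h'⟩
  exact not_pair_sublist_of_pair_sublist hw h h'

theorem card_inversions_reverse {T : Finset α} {w : List α} (hw : IsLinOrd T w) :
    (inversions T w w.reverse).card = T.card.choose 2 := by
  obtain ⟨hw, rfl⟩ := hw
  rw [List.toFinset_card_of_nodup hw, ← card_pair_sublists hw]
  congr 1
  ext ⟨p, q⟩
  simp [inversions, pair_sublist_reverse_iff]

theorem inversions_restr (T : Finset α) (w v : List α) :
    inversions T (restr T w) (restr T v) = inversions T w v := by
  ext ⟨p, q⟩
  simp only [mem_inversions]
  exact and_congr_right fun hp => and_congr_right fun hq =>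
    and_congr (pair_sublist_restr_iff hp hq) (pair_sublist_restr_iff hq hp)

theorem inversions_swap_subset (T : Finset α) (w : List α) {m r : List α} {x y : α} :
    inversions T w (m ++ y :: x :: r) ⊆ insert (x, y) (inversions T w (m ++ x :: y :: r)) := by
  rintro ⟨p, q⟩ h
  rw [Finset.mem_insert]
  by_cases hpq : (p, q) = (x, y)
  · exact Or.inl hpq
  · obtain ⟨hp, hq, hw, hv⟩ := mem_inversions.1 h
    refine Or.inr (mem_inversions.2 ⟨hp, hq, hw, pair_sublist_append_swap ?_ hv⟩)
    simpa [and_comm] using hpq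

theorem card_inversions_swap_le (T : Finset α) (w : List α) {m r : List α} {x y : α} :
    (inversions T w (m ++ y :: x :: r)).card ≤ (inversions T w (m ++ x :: y :: r)).card + 1 :=
  (Finset.card_le_card (inversions_swap_subset T w)).trans (Finset.card_insert_le _ _)

theorem pair_sublist_of_card_inversions_swap {T : Finset α} {w m r : List α} {x y : α}
    (h : (inversions T w (m ++ y :: x :: r)).card = (inversions T w (m ++ x :: y :: r)).card + 1) :
    [x, y] <+ w := by
  by_contra hxy
  have hnew : (x, y) ∉ inversions T w (m ++ y :: x :: r) := fun h => hxy (mem_inversions.1 h).2.2.1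
  have := Finset.card_le_card
    ((Finset.subset_insert_iff_of_notMem hnew).1 (inversions_swap_subset T w))
  omega

theorem card_inversions_swap_of_pair_sublist {T : Finset α} {w m r : List α} {x y : α}
    (hw : w.Nodup) (hv : (m ++ x :: y :: r).Nodup) (hxy : [x, y] <+ w) (hx : x ∈ T) (hy : y ∈ T) :
    (inversions T w (m ++ y :: x :: r)).card = (inversions T w (m ++ x :: y :: r)).card + 1 := by
  have hnew : (x, y) ∉ inversions T w (m ++ x :: y :: r) := fun h =>
    not_pair_sublist_of_pair_sublist hv (by simp) (mem_inversions.1 h).2.2.2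
  suffices inversions T w (m ++ y :: x :: r) = insert (x, y) (inversions T w (m ++ x :: y :: r)) by
    rw [this, Finset.card_insert_of_notMem hnew]
  refine (inversions_swap_subset T w).antisymm (Finset.insert_subset_iff.2 ⟨?_, ?_⟩)
  · exact mem_inversions.2 ⟨hx, hy, hxy, by simp⟩
  · rintro ⟨p, q⟩ h
    obtain ⟨hp, hq, hw', hv'⟩ := mem_inversions.1 h
    refine mem_inversions.2 ⟨hp, hq, hw', pair_sublist_append_swap ?_ hv'⟩
    rintro ⟨rfl, rfl⟩
    exact not_pair_sublist_of_pair_sublist hw hxy hw'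

end Inversions

theorem eq_self_of_le_add_one {g : ℕ → ℕ} {N : ℕ} (h0 : g 0 = 0) (hN : g N = N)
    (hstep : ∀ i < N, g (i + 1) ≤ g i + 1) {i : ℕ} (hi : i ≤ N) : g i = i := by
  have grow : ∀ i j, i + j ≤ N → g (i + j) ≤ g i + j := by
    intro i j
    induction j with
    | zero => simp
    | succ j ih =>
      intro h
      have := hstep (i + j) (by omega)
      have := ih (by omega)
      rw [← add_assoc]
      omega
  have h₁ := grow 0 i (by omega)
  have h₂ := grow i (N - i) (by omega)
  rw [Nat.add_sub_cancel' hi] at h₂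
  rw [zero_add] at h₁
  omega

theorem exists_path_of_stutter {γ : Type*} (R : γ → γ → Prop) (f : ℕ → γ) (g : ℕ → ℕ)
    (h0 : g 0 = 0) {N M : ℕ} (hM : g N = M)
    (hstep : ∀ i < N, (f (i + 1) = f i ∧ g (i + 1) = g i) ∨
      (R (f i) (f (i + 1)) ∧ g (i + 1) = g i + 1)) :
    ∃ d : ℕ → γ, d 0 = f 0 ∧ d M = f N ∧ (∀ k ≤ M, ∃ i ≤ N, d k = f i) ∧
      ∀ k < M, R (d k) (d (k + 1)) := by
  subst hM
  induction N with
  | zero =>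
    refine ⟨f, rfl, by rw [h0], fun k hk => ⟨0, le_rfl, by rw [h0] at hk; rw [Nat.le_zero.1 hk]⟩,
      fun k hk => by omega⟩
  | succ N ih =>
    obtain ⟨d, hd0, hdN, hdf, hdR⟩ := ih fun i hi => hstep i (by omega)
    rcases hstep N (by omega) with ⟨hf, hg⟩ | ⟨hR, hg⟩
    · refine ⟨d, hd0, by rw [hg, hf, hdN], fun k hk => ?_, fun k hk => hdR k (by omega)⟩
      obtain ⟨i, hi, h⟩ := hdf k (by omega)
      exact ⟨i, by omega, h⟩
    · refine ⟨fun k => if k ≤ g N then d k else f (N + 1), by simp [hd0], by simp [hg],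
        fun k hk => ?_, fun k hk => ?_⟩
      · by_cases hkN : k ≤ g N
        · obtain ⟨i, hi, h⟩ := hdf k hkN
          exact ⟨i, by omega, by simp [hkN, h]⟩
        · exact ⟨N + 1, le_rfl, by simp [hkN]⟩
      · by_cases hkN : k + 1 ≤ g N
        · simpa [hkN, show k ≤ g N by omega] using hdR k hkN
        · obtain rfl : k = g N := by omega
          simpa [hdN] using hR

theorem SemiConnected.maxWidth {A : Finset α} {D : Set (List α)} (hS : SemiConnected A D) :
    MaxWidth D := by
  obtain ⟨w, c, hw, -, hcN, hcD, -⟩ := hS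
  exact ⟨w, hw, hcN ▸ hcD _ le_rfl⟩

section Domains

variable [DecidableEq α]

theorem exists_adjSwap_pair_sublist_of_maximalChain {A : Finset α} {w : List α} {c : ℕ → List α}
    (hw : IsLinOrd A w) (hc0 : c 0 = w) (hcN : c (A.card.choose 2) = w.reverse)
    (hstep : ∀ i < A.card.choose 2, AdjSwap (c i) (c (i + 1))) {i : ℕ}
    (hi : i < A.card.choose 2) :
    ∃ l r x y, c i = l ++ x :: y :: r ∧ c (i + 1) = l ++ y :: x :: r ∧ [x, y] <+ w := by
  have hcard : ∀ j ≤ A.card.choose 2, (inversions A w (c j)).card = j := by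
    refine fun j hj => eq_self_of_le_add_one (g := fun j => (inversions A w (c j)).card)
      (by simp [hc0, inversions_self hw.1]) (by simp [hcN, card_inversions_reverse hw])
      (fun j hj => ?_) hj
    obtain ⟨l, r, x, y, h₁, h₂⟩ := hstep j hj
    simpa only [h₁, h₂] using card_inversions_swap_le A w
  obtain ⟨l, r, x, y, h₁, h₂⟩ := hstep i hi
  refine ⟨l, r, x, y, h₁, h₂, pair_sublist_of_card_inversions_swap (T := A) (m := l) (r := r) ?_⟩
  rw [← h₁, ← h₂, hcard i hi.le, hcard (i + 1) hi]

theorem restr_adjSwap_or_eq (T : Finset α) {w l r : List α} {x y : α} (hw : w.Nodup)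
    (hv : (l ++ x :: y :: r).Nodup) (hxy : [x, y] <+ w) :
    (restr T (l ++ y :: x :: r) = restr T (l ++ x :: y :: r) ∧
        (inversions T w (l ++ y :: x :: r)).card = (inversions T w (l ++ x :: y :: r)).card) ∨
      (AdjSwap (restr T (l ++ x :: y :: r)) (restr T (l ++ y :: x :: r)) ∧
        (inversions T w (l ++ y :: x :: r)).card =
          (inversions T w (l ++ x :: y :: r)).card + 1) := by
  by_cases hT : x ∈ T ∧ y ∈ T
  · exact Or.inr ⟨⟨restr T l, restr T r, x, y, restr_swap_of_mem hT.1 hT.2,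
      restr_swap_of_mem hT.2 hT.1⟩, card_inversions_swap_of_pair_sublist hw hv hxy hT.1 hT.2⟩
  · have h := restr_swap_of_not_mem (l := l) (r := r) hT
    refine Or.inl ⟨h, ?_⟩
    rw [← inversions_restr T w, h, inversions_restr]

theorem maj_map_restr_iff_s10 {A T : Finset α} {Q : List (List α)} (hQ : ∀ v ∈ Q, IsLinOrd A v)
    (hTA : T ⊆ A) {p q : α} (hp : p ∈ T) (hq : q ∈ T) : Maj (Q.map (restr T)) p q ↔ Maj Q p q := by
  have key : ∀ {p q}, p ∈ T → q ∈ T →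
      (Q.map (restr T)).countP (fun w => decide (w.idxOf p < w.idxOf q)) =
        Q.countP (fun w => decide (w.idxOf p < w.idxOf q)) := by
    intro p q hp hq
    rw [List.countP_map]
    refine List.countP_congr fun v hv => ?_
    have hv := hQ v hv
    simpa using idxOf_restr_lt_iff hv.1 hp hq (hv.mem (hTA hp)) (hv.mem (hTA hq))
  simp only [Maj, key hp hq, key hq hp]

theorem IsCondorcet.image_restr {A T : Finset α} {D : Set (List α)} (hC : IsCondorcet A D)
    (hTA : T ⊆ A) : IsCondorcet T (restr T '' D) := by
  refine ⟨?_, fun P hP hodd a ha b hb c hc hab hbc => ?_⟩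
  · rintro _ ⟨v, hv, rfl⟩
    exact (hC.1 v hv).restr hTA
  · obtain ⟨Q, hQ, rfl⟩ := exists_map_eq_of_forall_mem_image hP
    have hlin : ∀ v ∈ Q, IsLinOrd A v := fun v hv => hC.1 v (hQ v hv)
    rw [maj_map_restr_iff_s10 hlin hTA ha hb] at hab
    rw [maj_map_restr_iff_s10 hlin hTA hb hc] at hbc
    rw [maj_map_restr_iff_s10 hlin hTA ha hc]
    exact hC.2 Q hQ (by simpa using hodd) a (hTA ha) b (hTA hb) c (hTA hc) hab hbc

theorem SemiConnected.image_restr {A T : Finset α} {D : Set (List α)} (hD : ∀ w ∈ D, IsLinOrd A w)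
    (hS : SemiConnected A D) (hTA : T ⊆ A) : SemiConnected T (restr T '' D) := by
  obtain ⟨w, c, hw, hc0, hcN, hcD, hstep⟩ := hS
  have hwA := hD w hw
  have hg0 : (inversions T w (c 0)).card = 0 := by simp [hc0, inversions_self hwA.1]
  have hgN : (inversions T w (c (A.card.choose 2))).card = T.card.choose 2 := by
    rw [hcN, ← inversions_restr, restr_reverse, card_inversions_reverse (hwA.restr hTA)]
  obtain ⟨d, hd0, hdM, hdD, hd⟩ := exists_path_of_stutter AdjSwap (fun i => restr T (c i))
    (fun i => (inversions T w (c i)).card) hg0 hgN fun i hi => by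
      obtain ⟨l, r, x, y, h₁, h₂, hxy⟩ :=
        exists_adjSwap_pair_sublist_of_maximalChain hwA hc0 hcN hstep hi
      simpa only [h₁, h₂] using restr_adjSwap_or_eq T hwA.1 (h₁ ▸ (hD _ (hcD i hi.le)).1) hxy
  refine ⟨restr T w, d, ⟨w, hw, rfl⟩, by rw [hd0, hc0], by rw [hdM, hcN, restr_reverse],
    fun k hk => ?_, hd⟩
  obtain ⟨i, hi, hdk⟩ := hdD k hk
  exact hdk ▸ ⟨c i, hcD i hi, rfl⟩

end Domains

theorem stmt_10_general [DecidableEq α] (A : Finset α) (D : Set (List α)) (a : α)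
    (hC : IsCondorcet A D) (hS : SemiConnected A D) :
    IsCondorcet (A.erase a) (restr (A.erase a) '' D) ∧
      MaxWidth (restr (A.erase a) '' D) ∧
      SemiConnected (A.erase a) (restr (A.erase a) '' D) := by
  have hS' := hS.image_restr hC.1 (A.erase_subset a)
  exact ⟨hC.image_restr (A.erase_subset a), hS'.maxWidth, hS'⟩

/-- the restriction of a semi-connected Condorcet domain of
maximal width to `A \ {a}` is again a semi-connected Condorcet domain of
maximal width. -/
theorem stmt_10 [DecidableEq α] (A : Finset α) (D : Set (List α)) (a : α)
    (ha : a ∈ A) (hC : IsCondorcet A D) (hW : MaxWidth D)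
    (hS : SemiConnected A D) :
    IsCondorcet (A.erase a) (restr (A.erase a) '' D) ∧
      MaxWidth (restr (A.erase a) '' D) ∧
      SemiConnected (A.erase a) (restr (A.erase a) '' D) :=
  stmt_10_general A D a hC hS
end

section
/- A copious Condorcet domain satisfies a unique complete set of never conditions: if D ⊆ L(A) is a Condorcet domain whose restriction to every triple has exactly 4 orders, then for each 3-element subset {a,b,c} ⊆ A there is exactly one pair (x, i) with x ∈ {a,b,c}, i ∈ {1,2,3}, such that no order of D restricted to {a,b,c} places x in position i. -/
/-! Linear orders on a finite set `A` are encoded as duplicate-free lists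
(top alternative first) whose set of entries is `A`. -/

variable {α β : Type*}

/-! Label the triple by `f = ![a, b, c]`. The restrictions of the orders of `D` to `{a, b, c}` are
then the rankings `f ∘ σ` for `σ` in a set `T` of permutations of `Fin 3`, with `|T| = 4`, and
`f k N_{a,b,c} (i + 1)` says that `σ i ≠ k` for every `σ ∈ T`. A Condorcet domain contains no
Condorcet cycle, i.e. no three rankings `σ, σ r, σ r²` with `r` the rotation, so of the two
permutations missing from `T` one is even and one is odd. An even and an odd permutation of three
letters agree in exactly one position, which yields the unique never condition; this last step is a
finite check in `S₃`. -/

open Equiv Function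

theorem List.idxOf_ofFn [DecidableEq α] {n : ℕ} {g : Fin n → α} (hg : Injective g) (i : Fin n) :
    (List.ofFn g).idxOf (g i) = i := by
  simpa using (List.nodup_ofFn.mpr hg).idxOf_getElem i (by simp)

theorem List.exists_perm_eq_ofFn [DecidableEq α] {n : ℕ} {f : Fin n → α} (hf : Injective f)
    {l : List α} (hl : l.Nodup) (hset : l.toFinset = Finset.univ.image f) :
    ∃ σ : Equiv.Perm (Fin n), l = List.ofFn (f ∘ σ) := by
  have hlen : l.length = n := by
    rw [← List.toFinset_card_of_nodup hl, hset, Finset.card_image_of_injective _ hf,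
      Finset.card_fin]
  subst hlen
  have hmem (i : Fin l.length) : ∃ k, f k = l[i] := by
    have : l[i] ∈ l.toFinset := List.mem_toFinset.mpr (List.getElem_mem i.isLt)
    simpa [hset] using this
  choose g hg using hmem
  have hg_inj : Injective g := fun i j hij =>
    List.nodup_iff_injective_get.mp hl (by simpa [hg] using congrArg f hij)
  refine ⟨Equiv.ofBijective g (Finite.injective_iff_bijective.mp hg_inj), ?_⟩
  apply List.ext_getElem (by simp)
  intro i _ _
  simp [hg]

theorem restr_nodup [DecidableEq α] {A : Finset α} {w : List α} (hw : IsLinOrd A w)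
    (B : Finset α) : (restr B w).Nodup :=
  hw.1.filter _

theorem restr_toFinset [DecidableEq α] {A B : Finset α} {w : List α} (hw : IsLinOrd A w)
    (hBA : B ⊆ A) : (restr B w).toFinset = B := by
  ext z
  simp only [restr, List.toFinset_filter, hw.2, Finset.mem_filter, decide_eq_true_eq]
  exact ⟨And.right, fun h => ⟨hBA h, h⟩⟩

theorem idxOf_restr_lt_iff_s14 [DecidableEq α] {B : Finset α} {x y : α} (hx : x ∈ B) (hy : y ∈ B)
    (w : List α) :
    (restr B w).idxOf x < (restr B w).idxOf y ↔ w.idxOf x < w.idxOf y := by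
  induction w with
  | nil => simp [restr]
  | cons h t ih =>
    by_cases hxh : x = h
    · subst hxh
      by_cases hyx : y = x
      · simp [hyx]
      · simp [restr, hx, List.idxOf_cons_ne _ (Ne.symm hyx)]
    by_cases hyh : y = h
    · subst hyh
      simp [restr, hy, List.idxOf_cons_ne _ (Ne.symm hxh)]
    by_cases hh : h ∈ B <;>
      simpa [restr, List.filter_cons, hh, List.idxOf_cons_ne _ (Ne.symm hxh),
        List.idxOf_cons_ne _ (Ne.symm hyh)] using ih

theorem idxOf_lt_of_restr_eq_ofFn [DecidableEq α] {n : ℕ} {B : Finset α} {w : List α}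
    {g : Fin n → α} (hg : Injective g) (hB : ∀ k, g k ∈ B) (hw : restr B w = List.ofFn g)
    {i j : Fin n} (hij : i < j) : w.idxOf (g i) < w.idxOf (g j) := by
  rwa [← idxOf_restr_lt_iff_s14 (hB i) (hB j), hw, List.idxOf_ofFn hg, List.idxOf_ofFn hg]

theorem IsCondorcet.not_cycle [DecidableEq α] {A : Finset α} {D : Set (List α)}
    (hC : IsCondorcet A D) {x y z : α} (hx : x ∈ A) (hy : y ∈ A) (hz : z ∈ A)
    {u v t : List α} (hu : u ∈ D) (hv : v ∈ D) (ht : t ∈ D)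
    (hu₁ : u.idxOf x < u.idxOf y) (hu₂ : u.idxOf y < u.idxOf z)
    (hv₁ : v.idxOf y < v.idxOf z) (hv₂ : v.idxOf z < v.idxOf x)
    (ht₁ : t.idxOf z < t.idxOf x) (ht₂ : t.idxOf x < t.idxOf y) : False := by
  have hP : ∀ w ∈ [u, v, t], w ∈ D := by simp [hu, hv, ht]
  have hu₃ := hu₁.trans hu₂
  have hv₃ := hv₁.trans hv₂
  have ht₃ := ht₁.trans ht₂
  have hxy : Maj [u, v, t] x y := by
    simp [Maj, hu₁, ht₂, hv₃, hv₃.not_gt, hu₁.not_gt, ht₂.not_gt]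
  have hyz : Maj [u, v, t] y z := by
    simp [Maj, hu₂, hv₁, ht₃, ht₃.not_gt, hu₂.not_gt, hv₁.not_gt]
  have hzx : Maj [u, v, t] z x := by
    simp [Maj, hv₂, ht₁, hu₃, hu₃.not_gt, hv₂.not_gt, ht₁.not_gt]
  exact lt_asymm (hC.2 _ hP ⟨1, rfl⟩ x hx y hy z hz hxy hyz) hzx

open Classical in
noncomputable def realizedPerms {n : ℕ} (f : Fin n → α) (S : Set (List α)) :
    Finset (Perm (Fin n)) :=
  Finset.univ.filter fun σ => List.ofFn (f ∘ σ) ∈ S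

theorem mem_realizedPerms {n : ℕ} {f : Fin n → α} {S : Set (List α)} {σ : Perm (Fin n)} :
    σ ∈ realizedPerms f S ↔ List.ofFn (f ∘ σ) ∈ S := by
  simp [realizedPerms]

theorem ncard_eq_card_realizedPerms {n : ℕ} {f : Fin n → α} (hf : Injective f)
    {S : Set (List α)} (hS : ∀ l ∈ S, ∃ σ : Equiv.Perm (Fin n), l = List.ofFn (f ∘ σ)) :
    S.ncard = (realizedPerms f S).card := by
  have hinj : Injective fun σ : Perm (Fin n) => List.ofFn (f ∘ σ) := fun σ τ h =>
    Equiv.ext fun i => hf (congrFun (List.ofFn_injective h) i)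
  have himage : S = (fun σ : Perm (Fin n) => List.ofFn (f ∘ σ)) '' ↑(realizedPerms f S) := by
    ext l
    constructor
    · intro hl
      obtain ⟨σ, rfl⟩ := hS l hl
      exact ⟨σ, mem_realizedPerms.mpr hl, rfl⟩
    · rintro ⟨σ, hσ, rfl⟩
      exact mem_realizedPerms.mp hσ
  nth_rw 1 [himage]
  rw [Set.ncard_image_of_injective _ hinj, Set.ncard_coe_finset]

theorem never_iff_forall_realizedPerms [DecidableEq α] {D : Set (List α)} {a b c : α}
    {f : Fin 3 → α} (hf : Injective f)
    (hD : ∀ w ∈ D, ∃ σ : Perm (Fin 3), restr {a, b, c} w = List.ofFn (f ∘ σ)) (k i : Fin 3) :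
    Never D a b c (f k) (i + 1) ↔
      ∀ σ ∈ realizedPerms f (restr {a, b, c} '' D), σ i ≠ k := by
  simp only [Never, mem_realizedPerms, Nat.add_sub_cancel]
  constructor
  · rintro h σ ⟨w, hw, hwσ⟩ rfl
    exact h w hw (by simp [hwσ, -List.ofFn_succ])
  · intro h w hw hget
    obtain ⟨σ, hσ⟩ := hD w hw
    rw [hσ] at hget
    exact h σ ⟨w, hw, hσ⟩ (hf (by simpa [List.getElem?_ofFn, -List.ofFn_succ] using hget))

theorem IsCondorcet.not_cycle_realizedPerms [DecidableEq α] {A : Finset α} {D : Set (List α)}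
    (hC : IsCondorcet A D) {B : Finset α} {f : Fin 3 → α} (hf : Injective f)
    (hfA : ∀ k, f k ∈ A) (hfB : ∀ k, f k ∈ B) (σ : Perm (Fin 3)) :
    ¬ (σ ∈ realizedPerms f (restr B '' D) ∧ σ * finRotate 3 ∈ realizedPerms f (restr B '' D) ∧
      σ * finRotate 3 * finRotate 3 ∈ realizedPerms f (restr B '' D)) := by
  simp only [mem_realizedPerms]
  rintro ⟨⟨u, hu, hu'⟩, ⟨v, hv, hv'⟩, ⟨t, ht, ht'⟩⟩
  have lt_of (τ : Perm (Fin 3)) {w : List α} (hw : restr B w = List.ofFn (f ∘ τ))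
      {i j : Fin 3} (hij : i < j) : w.idxOf (f (τ i)) < w.idxOf (f (τ j)) :=
    idxOf_lt_of_restr_eq_ofFn (g := f ∘ τ) (hf.comp τ.injective) (fun k => hfB _) hw hij
  have h01 : (0 : Fin 3) < 1 := by decide
  have h12 : (1 : Fin 3) < 2 := by decide
  exact hC.not_cycle (hfA (σ 0)) (hfA (σ 1)) (hfA (σ 2)) hu hv ht
    (lt_of _ hu' h01) (lt_of _ hu' h12)
    (by simpa [finRotate_apply] using lt_of _ hv' h01)
    (by simpa [finRotate_apply] using lt_of _ hv' h12)
    (by simpa [finRotate_apply] using lt_of _ ht' h01)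
    (by simpa [finRotate_apply] using lt_of _ ht' h12)

theorem Equiv.Perm.existsUnique_forall_apply_ne (T : Finset (Perm (Fin 3))) (hT : T.card = 4)
    (hcyc : ∀ σ, ¬ (σ ∈ T ∧ σ * finRotate 3 ∈ T ∧ σ * finRotate 3 * finRotate 3 ∈ T)) :
    ∃! p : Fin 3 × Fin 3, ∀ σ ∈ T, σ p.2 ≠ p.1 := by
  revert T
  unfold ExistsUnique
  decide +kernel

theorem existsUnique_iff_of_injective {β γ : Type*} {g : β → γ} (hg : Injective g)
    {P : γ → Prop} (hP : ∀ y, P y → y ∈ Set.range g) : (∃! y, P y) ↔ ∃! x, P (g x) := by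
  constructor
  · rintro ⟨y, hy, huniq⟩
    obtain ⟨x, rfl⟩ := hP y hy
    exact ⟨x, hy, fun x' hx' => hg (huniq _ hx')⟩
  · rintro ⟨x, hx, huniq⟩
    refine ⟨g x, hx, fun y hy => ?_⟩
    obtain ⟨x', rfl⟩ := hP y hy
    rw [huniq x' hy]

theorem Matrix.injective_vecCons_three {a b c : α} (hab : a ≠ b) (hac : a ≠ c) (hbc : b ≠ c) :
    Injective ![a, b, c] := by
  intro i j h
  fin_cases i <;> fin_cases j <;> simp_all [eq_comm]

theorem Matrix.image_univ_vecCons_three [DecidableEq α] (a b c : α) :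
    Finset.univ.image ![a, b, c] = {a, b, c} := by
  ext x
  simp [Fin.exists_fin_succ, eq_comm]

theorem existsUnique_mem_triple_iff [DecidableEq α] {a b c : α} {f : Fin 3 → α}
    (hf : Injective f) (hB : Finset.univ.image f = {a, b, c}) {P : α → ℕ → Prop} :
    (∃! p : α × ℕ, p.1 ∈ ({a, b, c} : Finset α) ∧ p.2 ∈ ({1, 2, 3} : Finset ℕ) ∧ P p.1 p.2) ↔
      ∃! q : Fin 3 × Fin 3, P (f q.1) (q.2 + 1) := by
  have hg : Injective fun q : Fin 3 × Fin 3 => (f q.1, (q.2 : ℕ) + 1) := fun p q h =>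
    Prod.ext (hf (congrArg Prod.fst h)) (Fin.ext (by simpa using congrArg Prod.snd h))
  rw [existsUnique_iff_of_injective hg]
  · have hfB (k : Fin 3) : f k ∈ ({a, b, c} : Finset α) := hB ▸ Finset.mem_image_of_mem f (by simp)
    have hpos (i : Fin 3) : (i : ℕ) + 1 ∈ ({1, 2, 3} : Finset ℕ) := by fin_cases i <;> simp
    simp only [hfB, hpos, true_and]
  · rintro ⟨x, i⟩ ⟨hx, hi, -⟩
    obtain ⟨k, -, rfl⟩ := Finset.mem_image.mp (hB ▸ hx)
    simp only [Finset.mem_insert, Finset.mem_singleton] at hi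
    rcases hi with rfl | rfl | rfl
    exacts [⟨(k, 0), rfl⟩, ⟨(k, 1), rfl⟩, ⟨(k, 2), rfl⟩]

/-- a copious Condorcet domain satisfies a unique complete set of
never conditions: for each triple there is exactly one pair `(x,i)` with
`x N_{a,b,c} i`. -/
theorem stmt_14 [DecidableEq α] (A : Finset α) (D : Set (List α))
    (hC : IsCondorcet A D)
    (hcop : ∀ a ∈ A, ∀ b ∈ A, ∀ c ∈ A, a ≠ b → a ≠ c → b ≠ c →
      (restr {a, b, c} '' D).ncard = 4) :
    ∀ a ∈ A, ∀ b ∈ A, ∀ c ∈ A, a ≠ b → a ≠ c → b ≠ c →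
      ∃! p : α × ℕ, p.1 ∈ ({a, b, c} : Finset α) ∧
        p.2 ∈ ({1, 2, 3} : Finset ℕ) ∧ Never D a b c p.1 p.2 := by
  intro a ha b hb c hc hab hac hbc
  have hf := Matrix.injective_vecCons_three hab hac hbc
  have hB := Matrix.image_univ_vecCons_three a b c
  have hBA : ({a, b, c} : Finset α) ⊆ A := by simp [Finset.insert_subset_iff, ha, hb, hc]
  have hfB (k : Fin 3) : ![a, b, c] k ∈ ({a, b, c} : Finset α) :=
    hB ▸ Finset.mem_image_of_mem _ (Finset.mem_univ k)
  have hD (w : List α) (hw : w ∈ D) :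
      ∃ σ : Perm (Fin 3), restr {a, b, c} w = List.ofFn (![a, b, c] ∘ σ) :=
    List.exists_perm_eq_ofFn hf (restr_nodup (hC.1 w hw) _)
      ((restr_toFinset (hC.1 w hw) hBA).trans hB.symm)
  have hT : (realizedPerms ![a, b, c] (restr {a, b, c} '' D)).card = 4 := by
    rw [← ncard_eq_card_realizedPerms hf (by rintro l ⟨w, hw, rfl⟩; exact hD w hw)]
    exact hcop a ha b hb c hc hab hac hbc
  rw [existsUnique_mem_triple_iff hf hB]
  simp only [never_iff_forall_realizedPerms hf hD]
  exact Equiv.Perm.existsUnique_forall_apply_ne _ hT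
    (hC.not_cycle_realizedPerms hf (fun k => hBA (hfB k)) hfB)
end

section
/- The tensor product (F2(a,b) ⊗ F2(c,d))(ab, cd) is isomorphic to the Fishburn domain F4 via the bijection 1↦b, 2↦a, 3↦d, 4↦c; explicitly, the 9-element domain {abcd, abdc, bacd, badc, acbd, acdb, cabd, cadb, cdab} on {a,b,c,d} maps onto F4 = {1234, 1243, 2134, 2143, 2413, 2431, 4213, 4231, 4321}. -/
/-! Linear orders on a finite set `A` are encoded as duplicate-free lists
(top alternative first) whose set of entries is `A`. -/

variable {α β : Type*}

/-! The tensor product is the union of the four concatenations in `F2(a,b) ⊙ F2(c,d)` and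
the shuffles of `ab` and `cd`. Over disjoint alternative sets, an order restricting to `u`
and `v` is the same thing as an interleaving of the words `u` and `v`, so the shuffles are
the six interleavings of `ab` and `cd`. They share only `abcd` with the concatenations,
which leaves nine orders, and relabelling `F4` by `1↦b, 2↦a, 3↦d, 4↦c` gives the same nine. -/

def interleavings : List α → List α → List (List α)
  | [], v => [v]
  | u, [] => [u]
  | x :: u, y :: v =>
      (interleavings u (y :: v)).map (x :: ·) ++ (interleavings (x :: u) v).map (y :: ·)

@[simp]
theorem interleavings_nil_left (v : List α) : interleavings [] v = [v] := by
  cases v <;> simp [interleavings]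

@[simp]
theorem interleavings_nil_right (u : List α) : interleavings u [] = [u] := by
  cases u <;> simp [interleavings]

theorem cons_mem_interleavings_left {u v w : List α} (x : α)
    (hw : w ∈ interleavings u v) : x :: w ∈ interleavings (x :: u) v := by
  cases v with
  | nil => simp_all
  | cons y v => simp [interleavings, hw]

theorem cons_mem_interleavings_right {u v w : List α} (y : α)
    (hw : w ∈ interleavings u v) : y :: w ∈ interleavings u (y :: v) := by
  cases u with
  | nil => simp_all
  | cons x u => simp [interleavings, hw]

theorem perm_append_of_mem_interleavings {u v w : List α}
    (hw : w ∈ interleavings u v) : w.Perm (u ++ v) := by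
  induction u, v using interleavings.induct generalizing w with
  | case1 v => simp_all
  | case2 u => simp_all
  | case3 x u y v ihl ihr =>
    simp only [interleavings, List.mem_append, List.mem_map] at hw
    rcases hw with ⟨w', hw', rfl⟩ | ⟨w', hw', rfl⟩
    · exact (ihl hw').cons x
    · exact ((ihr hw').cons y).trans List.perm_middle.symm

theorem filter_mem_interleavings (p : α → Bool) {u v w : List α}
    (hw : w ∈ interleavings u v) :
    w.filter p ∈ interleavings (u.filter p) (v.filter p) := by
  induction u, v using interleavings.induct generalizing w with
  | case1 v => simp_all
  | case2 u => simp_all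
  | case3 x u y v ihl ihr =>
    simp only [interleavings, List.mem_append, List.mem_map] at hw
    rcases hw with ⟨w', hw', rfl⟩ | ⟨w', hw', rfl⟩
    · by_cases hx : p x
      · simpa [List.filter_cons, hx] using cons_mem_interleavings_left x (ihl hw')
      · simpa [List.filter_cons, hx] using ihl hw'
    · by_cases hy : p y
      · simpa [List.filter_cons, hy] using cons_mem_interleavings_right y (ihr hw')
      · simpa [List.filter_cons, hy] using ihr hw'

theorem mem_interleavings_filter_filter_not (p : α → Bool) (w : List α) :
    w ∈ interleavings (w.filter p) (w.filter (fun x => !p x)) := by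
  induction w with
  | nil => simp
  | cons x w ih =>
    by_cases hx : p x
    · simpa [List.filter_cons, hx] using cons_mem_interleavings_left x ih
    · simpa [List.filter_cons, hx] using cons_mem_interleavings_right x ih

theorem shuffles_eq_interleavings [DecidableEq α] {A B : Finset α} {u v : List α}
    (hAB : Disjoint A B) (hu : IsLinOrd A u) (hv : IsLinOrd B v) :
    shuffles A B u v = {w | w ∈ interleavings u v} := by
  have hu_mem : ∀ x ∈ u, x ∈ A := fun x hx => hu.2 ▸ List.mem_toFinset.mpr hx
  have hv_mem : ∀ x ∈ v, x ∈ B := fun x hx => hv.2 ▸ List.mem_toFinset.mpr hx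
  ext w
  constructor
  · rintro ⟨⟨-, hw⟩, rfl, rfl⟩
    have hB : w.filter (fun x => !decide (x ∈ A)) = restr B w := by
      refine List.filter_congr fun x hx => ?_
      have hx : x ∈ A ∪ B := hw ▸ List.mem_toFinset.mpr hx
      by_cases hxA : x ∈ A
      · simp [hxA, Finset.disjoint_left.mp hAB hxA]
      · simpa [hxA] using hx
    rw [← hB]
    exact mem_interleavings_filter_filter_not (fun x => decide (x ∈ A)) w
  · intro hw
    have hu_notB : ∀ x ∈ u, x ∉ B := fun x hx => Finset.disjoint_left.mp hAB (hu_mem x hx)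
    have hv_notA : ∀ x ∈ v, x ∉ A := fun x hx => Finset.disjoint_right.mp hAB (hv_mem x hx)
    have hperm := perm_append_of_mem_interleavings hw
    have hA := filter_mem_interleavings (fun x => decide (x ∈ A)) hw
    rw [List.filter_eq_self.mpr (by simpa using hu_mem),
      List.filter_eq_nil_iff.mpr (by simpa using hv_notA), interleavings_nil_right,
      List.mem_singleton] at hA
    have hB := filter_mem_interleavings (fun x => decide (x ∈ B)) hw
    rw [List.filter_eq_nil_iff.mpr (by simpa using hu_notB),
      List.filter_eq_self.mpr (by simpa using hv_mem), interleavings_nil_left,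
      List.mem_singleton] at hB
    refine ⟨⟨hperm.nodup_iff.mpr (List.nodup_append.mpr ⟨hu.1, hv.1, ?_⟩), ?_⟩, hA, hB⟩
    · exact fun x hx y hy hxy => hu_notB x hx (hxy ▸ hv_mem y hy)
    · rw [List.toFinset_eq_of_perm _ _ hperm, List.toFinset_append, hu.2, hv.2]

theorem concatDom_eq_image2 (D1 D2 : Set (List α)) :
    concatDom D1 D2 = Set.image2 (· ++ ·) D1 D2 := by
  ext w
  simp [concatDom, eq_comm]

/-- `(F2(a,b) ⊗ F2(c,d))(ab, cd)` equals the explicit 9-element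
domain and is isomorphic to the Fishburn domain `F4` via `1↦b, 2↦a, 3↦d, 4↦c`. -/
theorem stmt_17 [DecidableEq α] (a b c d : α)
    (hab : a ≠ b) (hac : a ≠ c) (had : a ≠ d)
    (hbc : b ≠ c) (hbd : b ≠ d) (hcd : c ≠ d) :
    tensor ({a, b} : Finset α) ({c, d} : Finset α)
        ({[a, b], [b, a]} : Set (List α)) ({[c, d], [d, c]} : Set (List α))
        [a, b] [c, d] =
      ({[a, b, c, d], [a, b, d, c], [b, a, c, d], [b, a, d, c], [a, c, b, d],
        [a, c, d, b], [c, a, b, d], [c, a, d, b], [c, d, a, b]} : Set (List α)) ∧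
    (List.map (fun n : ℕ => if n = 1 then b else if n = 2 then a
        else if n = 3 then d else c)) ''
        ({[1, 2, 3, 4], [1, 2, 4, 3], [2, 1, 3, 4], [2, 1, 4, 3], [2, 4, 1, 3],
          [2, 4, 3, 1], [4, 2, 1, 3], [4, 2, 3, 1], [4, 3, 2, 1]} : Set (List ℕ)) =
      tensor ({a, b} : Finset α) ({c, d} : Finset α)
        ({[a, b], [b, a]} : Set (List α)) ({[c, d], [d, c]} : Set (List α))
        [a, b] [c, d] := by
  have hT : tensor ({a, b} : Finset α) ({c, d} : Finset α)
      ({[a, b], [b, a]} : Set (List α)) ({[c, d], [d, c]} : Set (List α)) [a, b] [c, d] =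
      ({[a, b, c, d], [a, b, d, c], [b, a, c, d], [b, a, d, c], [a, c, b, d],
        [a, c, d, b], [c, a, b, d], [c, a, d, b], [c, d, a, b]} : Set (List α)) := by
    have hdisj : Disjoint ({a, b} : Finset α) {c, d} := by
      simp [hac.symm, had.symm, hbc.symm, hbd.symm]
    rw [tensor, concatDom_eq_image2, shuffles_eq_interleavings hdisj
      ⟨by simp [hab], by simp⟩ ⟨by simp [hcd], by simp⟩]
    ext w
    simp [interleavings]
    tauto
  refine ⟨hT, hT ▸ ?_⟩
  ext w
  simp [eq_comm]
  tauto
end
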